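/- Generalized Cesàro integral representation: for every integer p ≥ 0, every n ≥ 1, and every real x, B_n^p(x) = (2·n!/π)·Im ∫_0^π exp(x·σ^p(e^{it}))·sin(n·t) dt, where σ^p : ℂ → ℂ is the p-fold iterate of z ↦ e^z − 1 (σ^0 = id). -/

import Mathlib

/-!
Everything is read off the exponential generating function
`exp (x σ^p(w)) = ∑ₙ B_n^p(x) wⁿ / n!`, valid for all complex `x` and `w`. It is proved by
induction on `p`: substituting `e^w - 1` for `w` and expanding
`(e^w - 1)^k / k! = ∑ₙ S(n,k) wⁿ / n!` turns the coefficients `B_k^p` into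
`B_n^{p+1} = ∑ₖ S(n,k) B_k^p`; the rearrangement of the double series is justified by the same
series at `‖x‖`, `‖w‖`, which has nonnegative terms. On the unit circle `w = e^{it}` and for real
`x`, the imaginary part of the series is `∑ₘ B_m^p(x) / m! · sin (m t)`, and integrating it against
`sin (n t)` over `[0, π]` isolates the term `m = n`, since
`∫₀^π sin (m t) sin (n t) dt = π/2 · δ_{mn}` for `n ≥ 1`.
-/

/-- Stirling numbers of the second kind. -/
def S2 : ℕ → ℕ → ℕ
  | 0, 0 => 1
  | 0, _ + 1 => 0
  | _ + 1, 0 => 0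
  | n + 1, m + 1 => (m + 1) * S2 n (m + 1) + S2 n m

/-- Entries `S^p_{n,m}` of the `p`-th power of the Stirling matrix (for `p ≥ 1`;
the value at `p = 0` is junk). -/
def Sp : ℕ → ℕ → ℕ → ℕ
  | 0, _, _ => 0
  | 1, n, m => S2 n m
  | p + 2, n, m => ∑ k ∈ Finset.range (n + 1), S2 n k * Sp (p + 1) k m

/-- Higher order Bell polynomials: `B_n^0(x) = x^n`, `B_n^p(x) = ∑_{m=0}^n S^p_{n,m} x^m`. -/
noncomputable def BellP : ℕ → ℕ → ℝ → ℝ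
  | 0, n, x => x ^ n
  | p + 1, n, x => ∑ m ∈ Finset.range (n + 1), (Sp (p + 1) n m : ℝ) * x ^ m

/-- `σ^p : ℂ → ℂ`, the `p`-fold iterate of `z ↦ e^z - 1` (with `σ^0 = id`). -/
noncomputable def sigmaC (p : ℕ) : ℂ → ℂ := (fun z => Complex.exp z - 1)^[p]

open Finset Nat NormedSpace

theorem sub_one_pow_eq_sum_antidiagonal {R : Type*} [CommRing R] (a : R) (k : ℕ) :
    (a - 1) ^ k = ∑ q ∈ antidiagonal k, (k.choose q.1 : R) * a ^ q.1 * (-1) ^ q.2 := by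
  rw [sub_eq_add_neg, (Commute.all a (-1)).add_pow']
  simp only [nsmul_eq_mul, mul_assoc]

/-- `∑ⱼ (-1)^(k-j) C(k,j) jⁿ`, summed over `(j, k - j)` to avoid truncated subtraction. -/
def alternatingPowerSum (R : Type*) [CommRing R] (n k : ℕ) : R :=
  ∑ q ∈ antidiagonal k, (k.choose q.1 : R) * (q.1 : R) ^ n * (-1) ^ q.2

section

variable {R : Type*} [CommRing R]

theorem alternatingPowerSum_zero_left (k : ℕ) :
    alternatingPowerSum R 0 k = if k = 0 then 1 else 0 := by
  have h := sub_one_pow_eq_sum_antidiagonal (1 : R) k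
  simp only [sub_self, one_pow, mul_one] at h
  simp only [alternatingPowerSum, pow_zero, mul_one, ← h, zero_pow_eq]

theorem alternatingPowerSum_succ_succ (n k : ℕ) :
    alternatingPowerSum R (n + 1) (k + 1) =
      (k + 1) * (alternatingPowerSum R n (k + 1) + alternatingPowerSum R n k) := by
  set U := ∑ q ∈ antidiagonal k, (k.choose q.1 : R) * ((q.1 : R) + 1) ^ n * (-1) ^ q.2
  set V := ∑ q ∈ antidiagonal k, (k.choose (q.1 + 1) : R) * ((q.1 : R) + 1) ^ n * (-1) ^ q.2
  have hleft : alternatingPowerSum R (n + 1) (k + 1) = (k + 1) * U := by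
    rw [alternatingPowerSum, sum_antidiagonal_succ, mul_sum]
    simp only [Nat.cast_zero, zero_pow (succ_ne_zero n), mul_zero, zero_mul, zero_add]
    refine sum_congr rfl fun q _ => ?_
    have h : ((k + 1).choose (q.1 + 1) : R) * (q.1 + 1) = (k + 1) * k.choose q.1 := by
      exact_mod_cast congrArg (Nat.cast : ℕ → R) (add_one_mul_choose_eq k q.1).symm
    rw [Nat.cast_succ, pow_succ]
    linear_combination ((q.1 + 1 : R) ^ n * (-1) ^ q.2) * h
  have hright : alternatingPowerSum R n (k + 1) = 0 ^ n * (-1) ^ (k + 1) + U + V := by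
    rw [alternatingPowerSum, sum_antidiagonal_succ]
    simp only [choose_succ_succ', choose_zero_right, Nat.cast_add, Nat.cast_one, Nat.cast_zero,
      one_mul, add_mul, sum_add_distrib]
    ring
  -- peel `∑_{antidiagonal (k + 1)} C(k,j) jⁿ (-1)^i` at either end
  have hV : 0 ^ n * (-1) ^ (k + 1) + V = -alternatingPowerSum R n k := by
    have h := (sum_antidiagonal_succ (n := k)
      (f := fun q => (k.choose q.1 : R) * (q.1 : R) ^ n * (-1) ^ q.2)).symm.trans
        sum_antidiagonal_succ'
    simp only [choose_succ_self, choose_zero_right, pow_succ] at h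
    push_cast at h
    simp only [one_mul, zero_mul, mul_neg, mul_one, sum_neg_distrib, zero_add] at h
    rw [alternatingPowerSum]
    linear_combination h
  rw [hleft, hright]
  linear_combination -(k + 1 : R) * hV

theorem Nat.cast_factorial_mul_stirlingSecond (n k : ℕ) :
    ((k ! * stirlingSecond n k : ℕ) : R) = alternatingPowerSum R n k := by
  induction n generalizing k with
  | zero =>
    rw [alternatingPowerSum_zero_left]
    cases k <;> simp
  | succ n ih =>
    cases k with
    | zero => simp [alternatingPowerSum]
    | succ k =>
      rw [alternatingPowerSum_succ_succ, ← ih, ← ih, stirlingSecond_succ_succ, factorial_succ]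
      push_cast
      ring

end

section

variable {𝕂 : Type*} [RCLike 𝕂]

theorem hasSum_stirlingSecond_mul_pow_div_factorial (k : ℕ) (w : 𝕂) :
    HasSum (fun n => (stirlingSecond n k : 𝕂) * w ^ n / n !) ((exp w - 1) ^ k / k !) := by
  have hexp : HasSum (fun n => ∑ q ∈ antidiagonal k,
      (k.choose q.1 : 𝕂) * (-1) ^ q.2 * ((q.1 • w) ^ n / n !)) ((exp w - 1) ^ k) := by
    rw [sub_one_pow_eq_sum_antidiagonal]
    refine hasSum_sum fun q _ => ?_
    have h := (expSeries_div_hasSum_exp (q.1 • w)).mul_left ((k.choose q.1 : 𝕂) * (-1) ^ q.2)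
    rwa [exp_nsmul, mul_right_comm] at h
  refine (hexp.div_const (k ! : 𝕂)).congr_fun fun n => ?_
  rw [eq_div_iff (Nat.cast_ne_zero.2 (factorial_ne_zero k)), div_mul_eq_mul_div, mul_right_comm,
    ← Nat.cast_comm, ← Nat.cast_mul, Nat.cast_factorial_mul_stirlingSecond, alternatingPowerSum,
    sum_mul, sum_div]
  refine sum_congr rfl fun q _ => ?_
  rw [nsmul_eq_mul, mul_pow]
  ring

end

/-- The recursion is `S^{p+1} = S · S^p` applied to the vector `(x^m)ₘ`; see
`BellP_eq_higherBell`. -/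
def higherBell {R : Type*} [Semiring R] : ℕ → ℕ → R → R
  | 0, n, x => x ^ n
  | p + 1, n, x => ∑ k ∈ range (n + 1), (stirlingSecond n k : R) * higherBell p k x

theorem map_higherBell {R S : Type*} [Semiring R] [Semiring S] (f : R →+* S) (p n : ℕ) (x : R) :
    f (higherBell p n x) = higherBell p n (f x) := by
  induction p generalizing n with
  | zero => exact map_pow f x n
  | succ p ih => simp only [higherBell, map_sum, map_mul, map_natCast, ih]

theorem norm_higherBell_le {R : Type*} [SeminormedRing R] [NormOneClass R] (p n : ℕ) (x : R) :
    ‖higherBell p n x‖ ≤ higherBell p n ‖x‖ := by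
  induction p generalizing n with
  | zero => exact norm_pow_le x n
  | succ p ih =>
    refine (norm_sum_le _ _).trans (sum_le_sum fun k _ => (norm_mul_le _ _).trans ?_)
    gcongr
    · simpa using Nat.norm_cast_le (α := R) (stirlingSecond n k)
    · exact ih k

section

variable {𝕂 : Type*} [RCLike 𝕂]

theorem hasSum_higherBell_zero (x w : 𝕂) :
    HasSum (fun n => higherBell 0 n x * w ^ n / n !) (exp (x * w)) := by
  simpa only [higherBell, mul_pow] using expSeries_div_hasSum_exp (x * w)

theorem summable_higherBell_mul_stirlingSecond {p : ℕ}
    (hℝ : ∀ a b : ℝ, Summable fun n => higherBell p n a * b ^ n / n !) (x w : 𝕂) :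
    Summable fun q : ℕ × ℕ =>
      higherBell p q.1 x * ((stirlingSecond q.2 q.1 : 𝕂) * w ^ q.2 / q.2 !) := by
  set H : ℕ × ℕ → ℝ := fun q =>
    higherBell p q.1 ‖x‖ * ((stirlingSecond q.2 q.1 : ℝ) * ‖w‖ ^ q.2 / q.2 !)
  have hrows : ∀ k, HasSum (fun n => H (k, n)) (higherBell p k ‖x‖ * ((exp ‖w‖ - 1) ^ k / k !)) :=
    fun k => (hasSum_stirlingSecond_mul_pow_div_factorial k ‖w‖).mul_left _
  have hH : Summable H := by
    refine (summable_prod_of_nonneg fun q => ?_).2 ⟨fun k => (hrows k).summable, ?_⟩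
    · exact mul_nonneg ((norm_nonneg _).trans (norm_higherBell_le p q.1 x)) (by positivity)
    · simp_rw [(hrows _).tsum_eq, ← mul_div_assoc]
      exact hℝ _ _
  refine Summable.of_norm_bounded hH fun q => ?_
  simp only [H, norm_mul, norm_div, norm_pow, RCLike.norm_natCast]
  gcongr
  exact norm_higherBell_le p q.1 x

theorem hasSum_higherBell_succ {p : ℕ}
    (hℝ : ∀ a b : ℝ, Summable fun n => higherBell p n a * b ^ n / n !)
    (h𝕂 : ∀ x w : 𝕂, HasSum (fun n => higherBell p n x * w ^ n / n !)
      (exp (x * (fun z => exp z - 1)^[p] w)))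
    (x w : 𝕂) :
    HasSum (fun n => higherBell (p + 1) n x * w ^ n / n !)
      (exp (x * (fun z => exp z - 1)^[p + 1] w)) := by
  set g : ℕ × ℕ → 𝕂 := fun q =>
    higherBell p q.1 x * ((stirlingSecond q.2 q.1 : 𝕂) * w ^ q.2 / q.2 !)
  have hrows : ∀ k, HasSum (fun n => g (k, n)) (higherBell p k x * ((exp w - 1) ^ k / k !)) :=
    fun k => (hasSum_stirlingSecond_mul_pow_div_factorial k w).mul_left _
  have htotal : HasSum g (exp (x * (fun z => exp z - 1)^[p] (exp w - 1))) := by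
    have h := (summable_higherBell_mul_stirlingSecond hℝ x w).hasSum
    rwa [(h.prod_fiberwise hrows).unique
      (by simpa only [mul_div_assoc] using h𝕂 x (exp w - 1))] at h
  have hcols : ∀ n, HasSum (fun k => g (k, n)) (higherBell (p + 1) n x * w ^ n / n !) := by
    intro n
    convert hasSum_sum_of_ne_finset_zero (L := .unconditional ℕ) (s := range (n + 1))
      (fun k hk => ?_) using 1
    · simp only [g, higherBell, sum_mul, sum_div]
      exact sum_congr rfl fun k _ => by ring
    · simp [g, stirlingSecond_eq_zero_of_lt (by simpa using hk : n < k)]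
  rw [Function.iterate_succ_apply]
  exact ((Equiv.prodComm ℕ ℕ).hasSum_iff.mpr htotal).prod_fiberwise hcols

theorem hasSum_higherBell_mul_pow_div_factorial (p : ℕ) (x w : 𝕂) :
    HasSum (fun n => higherBell p n x * w ^ n / n !) (exp (x * (fun z => exp z - 1)^[p] w)) := by
  -- the real case comes first: each step over `𝕂` needs its absolute convergence
  have hℝ : ∀ p (a b : ℝ), HasSum (fun n => higherBell p n a * b ^ n / n !)
      (exp (a * (fun z => exp z - 1)^[p] b)) := by
    intro p
    induction p with
    | zero => exact hasSum_higherBell_zero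
    | succ p ih => exact hasSum_higherBell_succ (fun a b => (ih a b).summable) ih
  induction p generalizing x w with
  | zero => exact hasSum_higherBell_zero x w
  | succ p ih => exact hasSum_higherBell_succ (fun a b => (hℝ p a b).summable) ih x w

end

theorem S2_eq_stirlingSecond : S2 = stirlingSecond := by
  funext n k
  induction n generalizing k with
  | zero => cases k <;> rfl
  | succ n ih =>
    cases k with
    | zero => rfl
    | succ k => rw [S2, stirlingSecond_succ_succ, ih, ih]

theorem Sp_eq_zero_of_lt : ∀ (p : ℕ) {n m : ℕ}, n < m → Sp p n m = 0
  | 0, _, _, _ => rfl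
  | 1, _, _, h => by rw [Sp, S2_eq_stirlingSecond, stirlingSecond_eq_zero_of_lt h]
  | p + 2, _, _, h => sum_eq_zero fun k hk => by
      rw [Sp_eq_zero_of_lt (p + 1) (by simp at hk; omega), mul_zero]

theorem sum_Sp_mul_pow_eq_higherBell {R : Type*} [Semiring R] (p n : ℕ) (x : R) :
    ∑ m ∈ range (n + 1), (Sp (p + 1) n m : R) * x ^ m = higherBell (p + 1) n x := by
  induction p generalizing n with
  | zero => simp only [Sp, higherBell, S2_eq_stirlingSecond]
  | succ p ih =>
    calc ∑ m ∈ range (n + 1), (Sp (p + 2) n m : R) * x ^ m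
        = ∑ k ∈ range (n + 1), (stirlingSecond n k : R) *
            ∑ m ∈ range (n + 1), (Sp (p + 1) k m : R) * x ^ m := by
          simp only [Sp, S2_eq_stirlingSecond, Nat.cast_sum, Nat.cast_mul, sum_mul, mul_sum,
            mul_assoc]
          exact sum_comm
      _ = ∑ k ∈ range (n + 1), (stirlingSecond n k : R) * higherBell (p + 1) k x := by
          refine sum_congr rfl fun k hk => ?_
          rw [← ih k, sum_subset (range_subset_range.2 (by simp at hk; omega : k + 1 ≤ n + 1))]
          intro m _ hm
          simp only [mem_range, not_lt] at hm
          rw [Sp_eq_zero_of_lt _ (by omega), Nat.cast_zero, zero_mul]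
      _ = higherBell (p + 2) n x := rfl

theorem BellP_eq_higherBell (p n : ℕ) (x : ℝ) : BellP p n x = higherBell p n x := by
  cases p with
  | zero => rfl
  | succ p => exact sum_Sp_mul_pow_eq_higherBell p n x

theorem summable_abs_higherBell_div_factorial (p : ℕ) (x : ℝ) :
    Summable fun m => |higherBell p m x / (m !)| := by
  have h := (hasSum_higherBell_mul_pow_div_factorial p |x| 1).summable
  simp only [one_pow, mul_one] at h
  refine h.of_nonneg_of_le (fun m => abs_nonneg _) fun m => ?_
  rw [abs_div, Nat.abs_cast]
  gcongr
  exact norm_higherBell_le p m x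

section

open Real

theorem integral_cos_int_mul (k : ℤ) :
    ∫ t in (0 : ℝ)..π, cos (k * t) = if k = 0 then π else 0 := by
  split_ifs with hk
  · simp [hk]
  · have h := intervalIntegral.smul_integral_comp_mul_left cos (k : ℝ) (a := 0) (b := π)
    rw [integral_cos, mul_zero, sin_zero, sin_int_mul_pi, sub_zero, smul_eq_mul] at h
    exact (mul_eq_zero.1 h).resolve_left (Int.cast_ne_zero.2 hk)

theorem integral_sin_nat_mul_mul_sin_nat_mul (m : ℕ) {n : ℕ} (hn : n ≠ 0) :
    ∫ t in (0 : ℝ)..π, sin (m * t) * sin (n * t) = if m = n then π / 2 else 0 := by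
  have h : ∀ t : ℝ, sin (m * t) * sin (n * t) =
      (cos (((m - n : ℤ) : ℝ) * t) - cos (((m + n : ℤ) : ℝ) * t)) / 2 := by
    intro t
    have h2 := two_mul_sin_mul_sin (m * t) (n * t)
    push_cast
    rw [sub_mul, add_mul]
    linarith
  simp_rw [h]
  rw [intervalIntegral.integral_div,
    intervalIntegral.integral_sub (Continuous.intervalIntegrable (by fun_prop) _ _)
      (Continuous.intervalIntegrable (by fun_prop) _ _),
    integral_cos_int_mul, integral_cos_int_mul, if_neg (show (m + n : ℤ) ≠ 0 by omega)]
  split_ifs <;> first | omega | simp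

theorem continuous_sigmaC (p : ℕ) : Continuous (sigmaC p) :=
  (Complex.continuous_exp.sub continuous_const).iterate p

theorem hasSum_im_exp_mul_sigmaC (p : ℕ) (x t : ℝ) :
    HasSum (fun m => higherBell p m x / m ! * sin (m * t))
      (Complex.exp (x * sigmaC p (Complex.exp (Complex.I * t)))).im := by
  have h := Complex.hasSum_im
    (hasSum_higherBell_mul_pow_div_factorial p (x : ℂ) (Complex.exp (Complex.I * t)))
  rw [← Complex.exp_eq_exp_ℂ] at h
  refine h.congr_fun fun m => ?_
  rw [← Complex.ofRealHom_eq_coe, ← map_higherBell, Complex.ofRealHom_eq_coe,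
    ← Complex.exp_nat_mul,
    show (m : ℂ) * (Complex.I * t) = ((m * t : ℝ) : ℂ) * Complex.I by push_cast; ring,
    Complex.div_natCast_im, Complex.im_ofReal_mul, Complex.exp_ofReal_mul_I_im]
  ring

theorem hasSum_integral_im_exp_mul_sigmaC_mul_sin (p n : ℕ) (x : ℝ) :
    HasSum (fun m => higherBell p m x / m ! * ∫ t in (0 : ℝ)..π, sin (m * t) * sin (n * t))
      (∫ t in (0 : ℝ)..π,
        Complex.exp (x * sigmaC p (Complex.exp (Complex.I * t))) * sin (n * t)).im := by
  have hF : Continuous fun t : ℝ => Complex.exp (x * sigmaC p (Complex.exp (Complex.I * t))) := by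
    have := continuous_sigmaC p
    fun_prop
  have hint : IntervalIntegrable
      (fun t : ℝ => Complex.exp (x * sigmaC p (Complex.exp (Complex.I * t))) * sin (n * t))
      MeasureTheory.volume 0 π :=
    (hF.mul (by fun_prop)).intervalIntegrable _ _
  have him := intervalIntegral.intervalIntegral_im hint
  simp only [RCLike.im_to_complex, Complex.im_mul_ofReal] at him
  rw [← him]
  simp_rw [← intervalIntegral.integral_const_mul, ← mul_assoc]
  refine intervalIntegral.hasSum_integral_of_dominated_convergence
    (fun m _ => |higherBell p m x / (m !)|)
    (fun m => Continuous.aestronglyMeasurable (by fun_prop))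
    (fun m => MeasureTheory.ae_of_all _ fun t _ => ?_)
    (MeasureTheory.ae_of_all _ fun _ _ => summable_abs_higherBell_div_factorial p x)
    intervalIntegrable_const
    (MeasureTheory.ae_of_all _ fun t _ => (hasSum_im_exp_mul_sigmaC p x t).mul_right _)
  rw [Real.norm_eq_abs, abs_mul, abs_mul]
  calc |higherBell p m x / (m !)| * |sin (m * t)| * |sin (n * t)|
      ≤ |higherBell p m x / (m !)| * 1 * 1 := by gcongr <;> exact abs_sin_le_one _
    _ = |higherBell p m x / (m !)| := by ring

end

/-- Generalized Cesàro integral representation: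
`B_n^p(x) = (2 n!/π) · Im ∫_0^π exp(x σ^p(e^{it})) sin(nt) dt`. -/
theorem generalized_cesaro (p n : ℕ) (hn : 1 ≤ n) (x : ℝ) :
    BellP p n x =
      (2 * n.factorial / Real.pi) *
        (∫ t in (0:ℝ)..Real.pi,
            Complex.exp (x * sigmaC p (Complex.exp (Complex.I * t))) * Real.sin (n * t)).im := by
  have h := hasSum_integral_im_exp_mul_sigmaC_mul_sin p n x
  simp_rw [integral_sin_nat_mul_mul_sin_nat_mul _ (by omega : n ≠ 0), mul_ite, mul_zero] at h
  rw [BellP_eq_higherBell, h.unique (hasSum_single n fun m hm => if_neg hm), if_pos rfl]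
  field_simp
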